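/- arXiv:math/0612709 — 2 statements merged into one kernel-verified Lean document; each statement's English description precedes it below -/
import Mathlib

section
/- Let a > d+1, let P be a probability measure on ℝᵈ, and let Q = P ∘ T₁⁻¹ where T₁(y) = (y′, 1)′ ∈ ℝ^{d+1}. Then P(J) < 1 − (d−q)/a for every affine hyperplane J ⊂ ℝᵈ of dimension q < d if and only if Q(H) < 1 − (d+1−r)/a for every linear subspace H ⊂ ℝ^{d+1} of dimension r ≤ d. -/
open MeasureTheory Matrix

/-- `H` is a `q`-dimensional affine hyperplane: a translate of a `q`-dimensional
linear subspace. -/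
def IsAffineHyp {V : Type*} [AddCommGroup V] [Module ℝ V] (q : ℕ) (H : Set V) : Prop :=
  ∃ (T : Submodule ℝ V) (x : V), FiniteDimensional ℝ T ∧ Module.finrank ℝ T = q ∧
    H = (fun u => x + u) '' (T : Set V)

/-- The linear embedding `y ↦ (y, 0)`. -/
def Laux (d : ℕ) : (Fin d → ℝ) →ₗ[ℝ] (Fin d ⊕ Unit → ℝ) where
  toFun y := Sum.elim y 0
  map_add' x y := by funext z; cases z <;> simp
  map_smul' c x := by funext z; cases z <;> simp

lemma Laux_inj (d : ℕ) : Function.Injective (Laux d) := by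
  intro x y h
  funext i
  have := congrFun h (Sum.inl i)
  simpa [Laux] using this

lemma measT (d : ℕ) :
    Measurable (fun y : Fin d → ℝ => (Sum.elim y (fun _ => (1:ℝ)) : Fin d ⊕ Unit → ℝ)) := by
  apply measurable_pi_lambda
  rintro (i | u)
  · exact measurable_pi_apply i
  · exact measurable_const

/-- Proposition 11: for `a > d + 1`, `P ∈ 𝒱_{d,a}` iff `Q := P ∘ T₁⁻¹ ∈ 𝒰_{d+1,a}`,
where `T₁ y = (y', 1)'`. -/
theorem location_condition_iff_scatter_condition {d : ℕ} (a : ℝ) (ha : (d : ℝ) + 1 < a)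
    (P : Measure (Fin d → ℝ)) [IsProbabilityMeasure P]
    (Q : Measure (Fin d ⊕ Unit → ℝ))
    (hQ : Q = P.map (fun y => Sum.elim y fun _ => (1:ℝ))) :
    (∀ (q : ℕ) (J : Set (Fin d → ℝ)), q < d → IsAffineHyp q J →
        (P J).toReal < 1 - ((d : ℝ) - q) / a) ↔
      (∀ H : Submodule ℝ (Fin d ⊕ Unit → ℝ), Module.finrank ℝ H ≤ d →
        (Q (H : Set (Fin d ⊕ Unit → ℝ))).toReal <
          1 - (((d : ℝ) + 1) - Module.finrank ℝ H) / a) := by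
  have hd0 : (0:ℝ) ≤ (d:ℝ) := Nat.cast_nonneg d
  have ha0 : (0:ℝ) < a := by linarith
  set T₁ : (Fin d → ℝ) → (Fin d ⊕ Unit → ℝ) := fun y => Sum.elim y (fun _ => (1:ℝ)) with hT₁
  constructor
  · -- forward direction
    intro hP H hHd
    have hHmeas : MeasurableSet (H : Set (Fin d ⊕ Unit → ℝ)) :=
      H.closed_of_finiteDimensional.measurableSet
    have hQH : Q (H : Set (Fin d ⊕ Unit → ℝ)) = P (T₁ ⁻¹' (H : Set (Fin d ⊕ Unit → ℝ))) := by
      rw [hQ, Measure.map_apply (measT d) hHmeas]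
    by_cases hex : ∃ y, T₁ y ∈ H
    · obtain ⟨y₀, hy₀⟩ := hex
      set T₀ : Submodule ℝ (Fin d → ℝ) := H.comap (Laux d) with hT₀
      set q : ℕ := Module.finrank ℝ T₀ with hq
      -- the preimage is an affine hyperplane
      have hset : T₁ ⁻¹' (H : Set (Fin d ⊕ Unit → ℝ)) = (fun u => y₀ + u) '' (T₀ : Set _) := by
        ext y
        simp only [Set.mem_preimage, SetLike.mem_coe, Set.mem_image]
        constructor
        · intro hy
          refine ⟨y - y₀, ?_, by abel⟩
          show Laux d (y - y₀) ∈ H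
          have h1 : Laux d (y - y₀) = T₁ y - T₁ y₀ := by
            funext z; cases z <;> simp [Laux, hT₁]
          rw [h1]; exact H.sub_mem hy hy₀
        · rintro ⟨u, hu, rfl⟩
          have h1 : T₁ (y₀ + u) = T₁ y₀ + Laux d u := by
            funext z; cases z <;> simp [Laux, hT₁]
          show T₁ (y₀ + u) ∈ H
          rw [h1]; exact H.add_mem hy₀ hu
      -- dimension count: q < finrank H
      have hmaplt : T₀.map (Laux d) < H := by
        refine lt_of_le_of_ne (Submodule.map_comap_le _ _) ?_
        intro heq
        have : T₁ y₀ ∈ T₀.map (Laux d) := heq ▸ hy₀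
        obtain ⟨u, -, hu⟩ := this
        have := congrFun hu (Sum.inr ())
        simp [Laux, hT₁] at this
      have hqlt : q < Module.finrank ℝ H := by
        have h1 : Module.finrank ℝ (T₀.map (Laux d)) = q :=
          ((Submodule.equivMapOfInjective _ (Laux_inj d) T₀).finrank_eq).symm
        rw [← h1]
        exact Submodule.finrank_lt_finrank_of_lt hmaplt
      have hqd : q < d := lt_of_lt_of_le hqlt hHd
      have hPJ := hP q ((fun u => y₀ + u) '' (T₀ : Set _)) hqd
        ⟨T₀, y₀, inferInstance, rfl, rfl⟩
      rw [hQH, hset]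
      refine lt_of_lt_of_le hPJ ?_
      have hcast : ((d : ℝ) + 1) - (Module.finrank ℝ H : ℝ) ≤ (d : ℝ) - (q : ℝ) := by
        have : (q : ℝ) + 1 ≤ (Module.finrank ℝ H : ℝ) := by exact_mod_cast hqlt
        linarith
      have := div_le_div_of_nonneg_right (c := a) hcast ha0.le
      linarith
    · -- preimage is empty
      push_neg at hex
      have hset : T₁ ⁻¹' (H : Set (Fin d ⊕ Unit → ℝ)) = ∅ := by
        ext y; simpa using hex y
      rw [hQH, hset]
      simp only [measure_empty, ENNReal.toReal_zero]
      have hrle : (Module.finrank ℝ H : ℝ) ≤ (d : ℝ) := by exact_mod_cast hHd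
      have : ((d : ℝ) + 1) - (Module.finrank ℝ H : ℝ) < a := by linarith
      have h2 : (((d : ℝ) + 1) - (Module.finrank ℝ H : ℝ)) / a < 1 :=
        (div_lt_one ha0).2 this
      linarith
  · -- reverse direction
    intro hQc q J hqd hJ
    obtain ⟨T, x, hTfd, hTq, rfl⟩ := hJ
    set H : Submodule ℝ (Fin d ⊕ Unit → ℝ) := T.map (Laux d) ⊔ (ℝ ∙ T₁ x) with hH
    have hHmeas : MeasurableSet (H : Set (Fin d ⊕ Unit → ℝ)) :=
      H.closed_of_finiteDimensional.measurableSet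
    -- preimage of H is J
    have hset : T₁ ⁻¹' (H : Set (Fin d ⊕ Unit → ℝ)) = (fun u => x + u) '' (T : Set _) := by
      ext y
      simp only [Set.mem_preimage, SetLike.mem_coe, Set.mem_image]
      constructor
      · intro hy
        rw [hH] at hy
        obtain ⟨z, hz, w, hw, hzw⟩ := Submodule.mem_sup.1 hy
        obtain ⟨t, ht, rfl⟩ := hz
        obtain ⟨c, rfl⟩ := Submodule.mem_span_singleton.1 hw
        have hc : c = 1 := by
          have := congrFun hzw (Sum.inr ())
          simpa [Laux, hT₁] using this
        refine ⟨t, ht, ?_⟩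
        funext i
        have := congrFun hzw (Sum.inl i)
        rw [hc] at this
        simp only [Laux, hT₁] at this
        simpa [add_comm] using this
      · rintro ⟨t, ht, rfl⟩
        show T₁ (x + t) ∈ H
        rw [hH]
        refine Submodule.mem_sup.2 ⟨Laux d t, Submodule.mem_map_of_mem ht, T₁ x,
          Submodule.mem_span_singleton_self _, ?_⟩
        funext z; cases z <;> simp [Laux, hT₁, add_comm]
    -- finrank H ≤ q + 1
    have hrH : Module.finrank ℝ H ≤ q + 1 := by
      have h1 : Module.finrank ℝ (T.map (Laux d)) ≤ q := hTq ▸ Submodule.finrank_map_le _ _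
      have h2 : Module.finrank ℝ (ℝ ∙ T₁ x) = 1 := by
        apply finrank_span_singleton
        intro h0
        have := congrFun h0 (Sum.inr ())
        simp [hT₁] at this
      have h3 := Submodule.finrank_sup_add_finrank_inf_eq (T.map (Laux d)) (ℝ ∙ T₁ x)
      rw [hH]
      omega
    have hQH := hQc H (le_trans hrH hqd)
    have hPQ : Q (H : Set (Fin d ⊕ Unit → ℝ)) = P ((fun u => x + u) '' (T : Set _)) := by
      rw [hQ, Measure.map_apply (measT d) hHmeas, hset]
    rw [hPQ] at hQH
    refine lt_of_lt_of_le hQH ?_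
    have hcast : ((d : ℝ) - (q : ℝ)) ≤ ((d : ℝ) + 1) - (Module.finrank ℝ H : ℝ) := by
      have : (Module.finrank ℝ H : ℝ) ≤ (q : ℝ) + 1 := by exact_mod_cast hrH
      linarith
    have := div_le_div_of_nonneg_right (c := a) hcast ha0.le
    linarith
end

section
/- Let d ≥ 1, ν > 0, and for the laws P⁽ᵏ⁾ := (1/6)[δ_{(-1,-1/k)} + δ_{(-1,1/k)} + δ_{(1,-1/k)} + δ_{(1,1/k)}] + (1/3)δ_{(0,0)} on ℝ², every point has mass at most 1/3 < ν/(ν+2) when ν > 1, and every line has mass at most 2/3 < (ν+1)/(ν+2); i.e., P⁽ᵏ⁾ ∈ 𝒱_{2,ν+2} for each k ≥ 1, while the weak limit P = (1/3)[δ_{(-1,0)} + δ_{(0,0)} + δ_{(1,0)}] is concentrated on a line with mass 1 and hence P ∉ 𝒱_{2,ν+2}. -/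
open MeasureTheory

/-- `Q ∈ 𝒱_{2,a}`: every affine hyperplane of dimension `q < 2` has
`Q`-mass `< 1 - (2-q)/a`. -/
def MemV2 (a : ℝ) (Q : Measure (ℝ × ℝ)) : Prop :=
  ∀ (q : ℕ) (J : Set (ℝ × ℝ)), q < 2 → IsAffineHyp q J →
    (Q J).toReal < 1 - ((2 : ℝ) - q) / a

lemma pair_indep (a b c d : ℝ) (h : a * d - b * c ≠ 0) :
    LinearIndependent ℝ ![((a : ℝ), b), ((c : ℝ), d)] := by
  rw [LinearIndependent.pair_iff]
  intro s t hst
  rw [Prod.ext_iff] at hst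
  simp only [Prod.smul_mk, smul_eq_mul, Prod.mk_add_mk, Prod.mk_eq_zero, Prod.fst_zero,
    Prod.snd_zero] at hst
  obtain ⟨h1, h2⟩ := hst
  have hs : s * (a * d - b * c) = 0 := by linear_combination d * h1 - c * h2
  have ht : t * (a * d - b * c) = 0 := by linear_combination -b * h1 + a * h2
  exact ⟨(mul_eq_zero.1 hs).resolve_right h, (mul_eq_zero.1 ht).resolve_right h⟩

lemma no_two (T : Submodule ℝ (ℝ × ℝ)) (hT : Module.finrank ℝ T = 1)
    (u v : ℝ × ℝ) (hu : u ∈ T) (hv : v ∈ T) (h : LinearIndependent ℝ ![u, v]) : False := by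
  have hle : Submodule.span ℝ (Set.range ![u, v]) ≤ T := by
    rw [Submodule.span_le]
    rintro w ⟨i, rfl⟩
    fin_cases i <;> simpa
  have h2 : Module.finrank ℝ (Submodule.span ℝ (Set.range ![u, v])) = 2 := by
    rw [finrank_span_eq_card h]; simp
  have := Submodule.finrank_mono hle
  omega

lemma mu_apply (A B C D O : ℝ × ℝ) (S : Set (ℝ × ℝ)) :
    ((6 : ENNReal)⁻¹ • (Measure.dirac A + Measure.dirac B + Measure.dirac C + Measure.dirac D) +
      (3 : ENNReal)⁻¹ • Measure.dirac O) S =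
    6⁻¹ * (S.indicator 1 A + S.indicator 1 B + S.indicator 1 C + S.indicator 1 D) +
      3⁻¹ * S.indicator 1 O := by
  simp [Measure.add_apply, Measure.smul_apply, Measure.dirac_apply, smul_eq_mul, mul_add]

lemma key1 : (6 : ENNReal)⁻¹ * 2 + 3⁻¹ * 1 ≤ 2 / 3 := by
  rw [show (6:ENNReal)⁻¹ = ((6⁻¹ : NNReal) : ENNReal) by simp,
      show (3:ENNReal)⁻¹ = ((3⁻¹ : NNReal) : ENNReal) by simp,
      show (2:ENNReal)/3 = (((2/3) : NNReal) : ENNReal) by simp [ENNReal.coe_div],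
      show (2:ENNReal) = ((2 : NNReal) : ENNReal) by simp,
      show (1:ENNReal) = ((1 : NNReal) : ENNReal) by simp,
      ← ENNReal.coe_mul, ← ENNReal.coe_mul, ← ENNReal.coe_add, ENNReal.coe_le_coe,
      ← NNReal.coe_le_coe]
  push_cast
  norm_num

lemma key2 : (6 : ENNReal)⁻¹ * (1 + 1 + 1 + 1) + 3⁻¹ * 0 ≤ 2 / 3 := by
  rw [mul_zero, add_zero,
      show (6:ENNReal)⁻¹ = ((6⁻¹ : NNReal) : ENNReal) by simp,
      show ((1:ENNReal)+1+1+1) = ((4 : NNReal) : ENNReal) by norm_num,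
      show (2:ENNReal)/3 = (((2/3) : NNReal) : ENNReal) by simp [ENNReal.coe_div],
      ← ENNReal.coe_mul, ENNReal.coe_le_coe, ← NNReal.coe_le_coe]
  push_cast
  norm_num

lemma key3 : (6 : ENNReal)⁻¹ ≤ 3⁻¹ := by
  rw [show (6:ENNReal)⁻¹ = ((6⁻¹ : NNReal) : ENNReal) by simp,
      show (3:ENNReal)⁻¹ = ((3⁻¹ : NNReal) : ENNReal) by simp, ENNReal.coe_le_coe,
      ← NNReal.coe_le_coe]
  push_cast
  norm_num

lemma ind_le_one (S : Set (ℝ × ℝ)) (x : ℝ × ℝ) : S.indicator (1 : (ℝ × ℝ) → ENNReal) x ≤ 1 := by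
  classical
  rw [Set.indicator_apply]
  split <;> simp

lemma mu_singleton_le (A B C D O : ℝ × ℝ) (hAB : A ≠ B) (hAC : A ≠ C) (hAD : A ≠ D)
    (hBC : B ≠ C) (hBD : B ≠ D) (hCD : C ≠ D) (hAO : A ≠ O) (hBO : B ≠ O) (hCO : C ≠ O)
    (hDO : D ≠ O) (x : ℝ × ℝ) :
    ((6 : ENNReal)⁻¹ • (Measure.dirac A + Measure.dirac B + Measure.dirac C + Measure.dirac D) +
      (3 : ENNReal)⁻¹ • Measure.dirac O) {x} ≤ 3⁻¹ := by
  classical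
  rw [mu_apply]
  by_cases hA : A ∈ ({x} : Set _) <;> by_cases hB : B ∈ ({x} : Set _) <;>
    by_cases hC : C ∈ ({x} : Set _) <;> by_cases hD : D ∈ ({x} : Set _) <;>
    by_cases hO : O ∈ ({x} : Set _) <;>
    simp_all [Set.indicator_apply] <;>
    norm_num

lemma mu_line_le (A B C D O : ℝ × ℝ) (S : Set (ℝ × ℝ))
    (h : O ∈ S → ¬(A ∈ S ∧ B ∈ S) ∧ ¬(A ∈ S ∧ C ∈ S) ∧ ¬(B ∈ S ∧ D ∈ S) ∧ ¬(C ∈ S ∧ D ∈ S)) :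
    ((6 : ENNReal)⁻¹ • (Measure.dirac A + Measure.dirac B + Measure.dirac C + Measure.dirac D) +
      (3 : ENNReal)⁻¹ • Measure.dirac O) S ≤ 2 / 3 := by
  classical
  rw [mu_apply]
  by_cases hO : O ∈ S
  · obtain ⟨h1, h2, h3, h4⟩ := h hO
    have hsum : S.indicator 1 A + S.indicator 1 B + S.indicator 1 C + S.indicator 1 D
        ≤ (2 : ENNReal) := by
      by_cases hA : A ∈ S <;> by_cases hB : B ∈ S <;> by_cases hC : C ∈ S <;>
        by_cases hD : D ∈ S <;> simp_all [Set.indicator_apply] <;> norm_num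
    calc _ ≤ (6 : ENNReal)⁻¹ * 2 + 3⁻¹ * 1 := by
          gcongr
          exact ind_le_one S O
      _ ≤ 2 / 3 := key1
  · rw [Set.indicator_of_notMem hO]
    calc _ ≤ (6 : ENNReal)⁻¹ * (1 + 1 + 1 + 1) + 3⁻¹ * 0 := by
          gcongr <;> exact ind_le_one S _
      _ ≤ 2 / 3 := key2

/-- The example after Theorem 12: the laws `P⁽ᵏ⁾` lie in `𝒱_{2,ν+2}` (points have
mass ≤ 1/3 < ν/(ν+2), lines mass ≤ 2/3 < (ν+1)/(ν+2)) while their weak limit `P`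
charges a line with mass 1, so `P ∉ 𝒱_{2,ν+2}`. -/
theorem example_Pk_in_V_but_limit_not {ν : ℝ} (hν : 1 < ν) :
    let Pk : ℕ → Measure (ℝ × ℝ) := fun k =>
      (6 : ENNReal)⁻¹ • (Measure.dirac (-1, -(k : ℝ)⁻¹) + Measure.dirac (-1, (k : ℝ)⁻¹) +
        Measure.dirac (1, -(k : ℝ)⁻¹) + Measure.dirac (1, (k : ℝ)⁻¹)) +
      (3 : ENNReal)⁻¹ • Measure.dirac (0, 0)
    let P : Measure (ℝ × ℝ) :=
      (3 : ENNReal)⁻¹ • (Measure.dirac (-1, 0) + Measure.dirac (0, 0) +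
        Measure.dirac (1, 0))
    (∀ k : ℕ, 1 ≤ k →
      (∀ x : ℝ × ℝ, Pk k {x} ≤ 3⁻¹) ∧
      (∀ L : Set (ℝ × ℝ), IsAffineHyp 1 L → Pk k L ≤ 2 / 3) ∧
      MemV2 (ν + 2) (Pk k)) ∧
    ((1 : ℝ) / 3 < ν / (ν + 2)) ∧ ((2 : ℝ) / 3 < (ν + 1) / (ν + 2)) ∧
    (∃ L : Set (ℝ × ℝ), IsAffineHyp 1 L ∧ P L = 1) ∧
    ¬MemV2 (ν + 2) P := by
  intro Pk P
  have hν2 : (0 : ℝ) < ν + 2 := by linarith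
  -- the limit line
  have hline : ∃ L : Set (ℝ × ℝ), IsAffineHyp 1 L ∧ P L = 1 := by
    refine ⟨(fun u => (0, 0) + u) '' ((Submodule.span ℝ {((1 : ℝ), (0 : ℝ))} : Submodule ℝ (ℝ × ℝ)) : Set (ℝ × ℝ)),
      ⟨Submodule.span ℝ {((1 : ℝ), (0 : ℝ))}, (0, 0), inferInstance,
        finrank_span_singleton (by simp [Prod.ext_iff] <;> intros <;> linarith), rfl⟩, ?_⟩
    have himg : (fun u => ((0 : ℝ), (0 : ℝ)) + u) ''
        ((Submodule.span ℝ {((1 : ℝ), (0 : ℝ))} : Submodule ℝ (ℝ × ℝ)) : Set (ℝ × ℝ)) =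
        ((Submodule.span ℝ {((1 : ℝ), (0 : ℝ))} : Submodule ℝ (ℝ × ℝ)) : Set (ℝ × ℝ)) := by
      rw [show ((0 : ℝ), (0 : ℝ)) = (0 : ℝ × ℝ) from rfl]
      simp
    rw [himg]
    have h1 : ((-1 : ℝ), (0 : ℝ)) ∈ Submodule.span ℝ {((1 : ℝ), (0 : ℝ))} :=
      Submodule.mem_span_singleton.2 ⟨-1, by norm_num [Prod.smul_mk, Prod.ext_iff]⟩
    have h2 : ((0 : ℝ), (0 : ℝ)) ∈ Submodule.span ℝ {((1 : ℝ), (0 : ℝ))} := by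
      rw [show ((0 : ℝ), (0 : ℝ)) = (0 : ℝ × ℝ) from rfl]; exact zero_mem _
    have h3 : ((1 : ℝ), (0 : ℝ)) ∈ Submodule.span ℝ {((1 : ℝ), (0 : ℝ))} :=
      Submodule.mem_span_singleton.2 ⟨1, by norm_num [Prod.smul_mk, Prod.ext_iff]⟩
    show ((3 : ENNReal)⁻¹ • (Measure.dirac (-1, 0) + Measure.dirac (0, 0) +
        Measure.dirac (1, 0)) : Measure (ℝ × ℝ))
        ((Submodule.span ℝ {((1 : ℝ), (0 : ℝ))} : Submodule ℝ (ℝ × ℝ)) : Set (ℝ × ℝ)) = 1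
    rw [Measure.smul_apply, Measure.add_apply, Measure.add_apply, Measure.dirac_apply,
      Measure.dirac_apply, Measure.dirac_apply, smul_eq_mul,
      Set.indicator_of_mem h1, Set.indicator_of_mem h2, Set.indicator_of_mem h3]
    rw [show ((1 : ℝ × ℝ → ENNReal) (-1, 0) + (1 : ℝ × ℝ → ENNReal) (0, 0) +
      (1 : ℝ × ℝ → ENNReal) (1, 0)) = (3 : ENNReal) by norm_num]
    exact ENNReal.inv_mul_cancel (by norm_num) (by norm_num)
  refine ⟨?_, ?_, ?_, hline, ?_⟩
  · -- the Pk's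
    intro k hk
    have hkR : (0 : ℝ) < (k : ℝ)⁻¹ := by
      have : (0 : ℝ) < (k : ℝ) := by exact_mod_cast hk
      positivity
    set e : ℝ := (k : ℝ)⁻¹ with he
    have hpoint : ∀ x : ℝ × ℝ, Pk k {x} ≤ 3⁻¹ := by
      intro x
      exact mu_singleton_le _ _ _ _ _
        (by simp [Prod.ext_iff] <;> intros <;> linarith)
        (by simp [Prod.ext_iff] <;> intros <;> linarith)
        (by simp [Prod.ext_iff] <;> intros <;> linarith)
        (by simp [Prod.ext_iff] <;> intros <;> linarith)
        (by simp [Prod.ext_iff] <;> intros <;> linarith)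
        (by simp [Prod.ext_iff] <;> intros <;> linarith)
        (by simp [Prod.ext_iff] <;> intros <;> linarith)
        (by simp [Prod.ext_iff] <;> intros <;> linarith)
        (by simp [Prod.ext_iff] <;> intros <;> linarith)
        (by simp [Prod.ext_iff] <;> intros <;> linarith) x
    have hlineK : ∀ L : Set (ℝ × ℝ), IsAffineHyp 1 L → Pk k L ≤ 2 / 3 := by
      intro L hL
      obtain ⟨T, x, hfin, hrank, rfl⟩ := hL
      apply mu_line_le
      intro hO
      obtain ⟨u, hu, hxu⟩ := hO
      have hx : x ∈ T := by
        have h0 : x + u = 0 := hxu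
        rw [eq_neg_of_add_eq_zero_left h0]; exact neg_mem hu
      have hS : (fun u => x + u) '' (T : Set (ℝ × ℝ)) = (T : Set (ℝ × ℝ)) := by
        ext p
        constructor
        · rintro ⟨v, hv, rfl⟩; exact T.add_mem hx hv
        · intro hp
          exact ⟨p - x, T.sub_mem hp hx, by show x + (p - x) = p; abel⟩
      rw [hS]
      have hne : ∀ c : ℝ, c = 2 * e ∨ c = -(2 * e) → c ≠ 0 := by
        rintro c (rfl | rfl) <;> intro h <;> nlinarith
      refine ⟨?_, ?_, ?_, ?_⟩ <;> rintro ⟨hP, hQ⟩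
      · exact no_two T hrank _ _ hP hQ (pair_indep (-1) (-e) (-1) e (by intro h; nlinarith))
      · exact no_two T hrank _ _ hP hQ (pair_indep (-1) (-e) 1 (-e) (by intro h; nlinarith))
      · exact no_two T hrank _ _ hP hQ (pair_indep (-1) e 1 e (by intro h; nlinarith))
      · exact no_two T hrank _ _ hP hQ (pair_indep 1 (-e) 1 e (by intro h; nlinarith))
    refine ⟨hpoint, hlineK, ?_⟩
    intro q J hq hJ
    interval_cases q
    · -- points
      obtain ⟨T, x, hfin, hrank, rfl⟩ := hJ
      have hT : T = ⊥ := Submodule.finrank_eq_zero.mp hrank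
      subst hT
      have : (fun u => x + u) '' ((⊥ : Submodule ℝ (ℝ × ℝ)) : Set (ℝ × ℝ)) = {x} := by
        simp
      rw [this]
      have h1 : (Pk k {x}).toReal ≤ 1 / 3 := by
        have := ENNReal.toReal_mono (by norm_num) (hpoint x)
        simpa using this
      have h2 : (2 : ℝ) / (ν + 2) < 2 / 3 := by
        rw [div_lt_div_iff₀ hν2 (by norm_num)]; linarith
      push_cast
      linarith
    · -- lines
      have h1 : (Pk k J).toReal ≤ 2 / 3 := by
        have := ENNReal.toReal_mono (ENNReal.div_lt_top (by norm_num) (by norm_num)).ne (hlineK J hJ)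
        rw [ENNReal.toReal_div] at this
        simpa using this
      have h2 : (1 : ℝ) / (ν + 2) < 1 / 3 := by
        rw [div_lt_div_iff₀ hν2 (by norm_num)]; linarith
      push_cast
      linarith
  · rw [div_lt_div_iff₀ (by norm_num) hν2]; linarith
  · rw [div_lt_div_iff₀ (by norm_num) hν2]; linarith
  · intro h
    obtain ⟨L, hL, hPL⟩ := hline
    have h1 := h 1 L (by norm_num) hL
    rw [hPL] at h1
    simp only [ENNReal.toReal_one, Nat.cast_one] at h1
    have h2 : (0 : ℝ) < 1 / (ν + 2) := by positivity
    have h3 : (2 : ℝ) - 1 = 1 := by norm_num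
    rw [h3] at h1
    linarith
end
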